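/- Let m be a positive integer, p ∈ [0,1], let k > m be a fixed integer and let l be a fixed integer with 2 ≤ l ≤ m. For integers t ≥ 2 define H(j,t+1) = p(2mt+1-j)/(t(2mt+1-2m)) + (1-p)j/(2mt) and K(j,t+1) = 1 - H(j,t+1) for m ≤ j ≤ 2mt, and G(l,t+1) = C(m,l)·H(k-l,t+1)^l·K(k-l,t+1)^{m-l}, where C(m,l) is the binomial coefficient. Then lim_{t→∞} G(l,t+1)·(t-1)/(t+1 - t·K(k,t+1)^m) = 0. -/

import Mathlib

open Filter Topology

/-! Since `t * H(j,t+1) → p + (1-p) j / (2m)`, `H` is `O(1/t)`: for `l ≥ 2` the numerator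
`G(l,t+1) (t-1)` is `O(t^{1-l}) → 0`, while by the geometric sum the denominator
`1 + t (1 - K(k,t+1)^m)` tends to `1 + m (p + (1-p) k / (2m))`, which is positive for `p ∈ [0,1]`. -/

/-- The unconditional attachment probability `H(j,t+1)` to a vertex of degree `j`
at time `t` in the PA-APA model (degree argument taken real). -/
noncomputable def Hpaapa (m : ℕ) (p : ℝ) (j : ℝ) (t : ℕ) : ℝ :=
  p * (2 * (m : ℝ) * t + 1 - j) / ((t : ℝ) * (2 * (m : ℝ) * t + 1 - 2 * m))
    + (1 - p) * j / (2 * (m : ℝ) * t)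

lemma natCast_mul_Hpaapa (m : ℕ) (p j : ℝ) {t : ℕ} (ht : t ≠ 0) :
    t * Hpaapa m p j t
      = p * ((1 - j + 2 * m * t) / (1 - 2 * m + 2 * m * t)) + (1 - p) * j / (2 * m) := by
  have ht' : (t : ℝ) ≠ 0 := Nat.cast_ne_zero.mpr ht
  rw [Hpaapa, mul_add, ← mul_div_assoc, ← mul_div_assoc, mul_left_comm, mul_div_assoc,
    mul_div_mul_left _ _ ht', mul_comm (2 * (m : ℝ)) t, mul_div_mul_left _ _ ht']
  ring

lemma tendsto_natCast_mul_Hpaapa {m : ℕ} (hm : 1 ≤ m) (p j : ℝ) :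
    Tendsto (fun t : ℕ => t * Hpaapa m p j t) atTop (𝓝 (p + (1 - p) * j / (2 * m))) := by
  have h2m : (2 * m : ℝ) ≠ 0 := by positivity
  have hratio := tendsto_add_mul_div_add_mul_atTop_nhds (1 - j) (1 - 2 * m) (2 * m) h2m
  rw [div_self h2m] at hratio
  have hlim := (hratio.const_mul p).add_const ((1 - p) * j / (2 * m))
  rw [mul_one] at hlim
  refine hlim.congr' ?_
  filter_upwards [eventually_ne_atTop 0] with t ht
  rw [natCast_mul_Hpaapa m p j ht]

lemma tendsto_zero_of_tendsto_natCast_mul {f : ℕ → ℝ} {c : ℝ}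
    (hf : Tendsto (fun t : ℕ => t * f t) atTop (𝓝 c)) : Tendsto f atTop (𝓝 0) := by
  have hlim := tendsto_inv_atTop_nhds_zero_nat.mul hf
  rw [zero_mul] at hlim
  refine hlim.congr' ?_
  filter_upwards [eventually_ne_atTop 0] with t ht
  rw [← mul_assoc, inv_mul_cancel₀ (Nat.cast_ne_zero.mpr ht), one_mul]

lemma tendsto_pow_mul_natCast_sub_one {f : ℕ → ℝ} {c : ℝ}
    (hf : Tendsto (fun t : ℕ => t * f t) atTop (𝓝 c)) {l : ℕ} (hl : 2 ≤ l) :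
    Tendsto (fun t : ℕ => f t ^ l * (t - 1)) atTop (𝓝 0) := by
  have hf0 := tendsto_zero_of_tendsto_natCast_mul hf
  have hlim := (hf.mul (hf0.pow (l - 1))).sub (hf0.pow l)
  rw [zero_pow (by omega), zero_pow (by omega), mul_zero, sub_zero] at hlim
  refine hlim.congr fun t => ?_
  obtain ⟨n, rfl⟩ : ∃ n, l = n + 1 := ⟨l - 1, by omega⟩
  simp only [Nat.add_sub_cancel, pow_succ]
  ring

lemma tendsto_natCast_add_one_sub_mul_one_sub_pow {f : ℕ → ℝ} {c : ℝ}
    (hf : Tendsto (fun t : ℕ => t * f t) atTop (𝓝 c)) (m : ℕ) :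
    Tendsto (fun t : ℕ => t + 1 - t * (1 - f t) ^ m) atTop (𝓝 (1 + c * m)) := by
  have hf0 := tendsto_zero_of_tendsto_natCast_mul hf
  have hgeom : Tendsto (fun t => ∑ i ∈ Finset.range m, (1 - f t) ^ i) atTop (𝓝 m) := by
    simpa using tendsto_finsetSum (Finset.range m) fun i _ => (hf0.const_sub 1).pow i
  refine (hf.mul hgeom).const_add 1 |>.congr fun t => ?_
  -- `1 - (1 - x) ^ m = x * ∑_{i < m} (1 - x) ^ i`
  linear_combination (-(t : ℝ)) * geom_sum_mul (1 - f t) m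

theorem pa_apa_limit_multi_edge_general (m k l : ℕ) (hm : 1 ≤ m)
    (hl2 : 2 ≤ l) (p : ℝ) (hp0 : 0 ≤ p) (hp1 : p ≤ 1) :
    Tendsto (fun t : ℕ =>
      ((m.choose l : ℝ) * Hpaapa m p ((k : ℝ) - l) t ^ l
          * (1 - Hpaapa m p ((k : ℝ) - l) t) ^ (m - l))
        * ((t : ℝ) - 1) / ((t : ℝ) + 1 - (t : ℝ) * (1 - Hpaapa m p (k : ℝ) t) ^ m))
      atTop (nhds 0) := by
  have hHj := tendsto_natCast_mul_Hpaapa hm p ((k : ℝ) - l)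
  have hHk := tendsto_natCast_mul_Hpaapa hm p (k : ℝ)
  have hnum := ((tendsto_pow_mul_natCast_sub_one hHj hl2).const_mul (m.choose l : ℝ)).mul
    (((tendsto_zero_of_tendsto_natCast_mul hHj).const_sub 1).pow (m - l))
  have hden := tendsto_natCast_add_one_sub_mul_one_sub_pow hHk m
  have hden_ne : 1 + (p + (1 - p) * k / (2 * m)) * m ≠ 0 := by
    have : 0 ≤ 1 - p := sub_nonneg.mpr hp1
    positivity
  rw [mul_zero, zero_mul] at hnum
  have hlim := hnum.div hden hden_ne
  rw [zero_div] at hlim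
  refine hlim.congr fun t => ?_
  simp only [Pi.div_apply]
  ring

/-- Asymptotically only the one-edge transition contributes: for fixed `2 ≤ l ≤ m`,
with `G(l,t+1) = C(m,l) H(k-l,t+1)^l K(k-l,t+1)^{m-l}` and `K = 1 - H`,
`G(l,t+1)(t-1)/(t+1 - t K(k,t+1)^m) → 0`. -/
theorem pa_apa_limit_multi_edge (m k l : ℕ) (hm : 1 ≤ m) (hk : m < k)
    (hl2 : 2 ≤ l) (hlm : l ≤ m) (p : ℝ) (hp0 : 0 ≤ p) (hp1 : p ≤ 1) :
    Tendsto (fun t : ℕ =>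
      ((m.choose l : ℝ) * Hpaapa m p ((k : ℝ) - l) t ^ l
          * (1 - Hpaapa m p ((k : ℝ) - l) t) ^ (m - l))
        * ((t : ℝ) - 1) / ((t : ℝ) + 1 - (t : ℝ) * (1 - Hpaapa m p (k : ℝ) t) ^ m))
      atTop (nhds 0) :=
  pa_apa_limit_multi_edge_general m k l hm hl2 p hp0 hp1
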